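/- arXiv:1812.02203 — 3 statements merged into one kernel-verified Lean document; each statement's English description precedes it below -/
import Mathlib

section
/- Let $U \subseteq \mathbb{C}$ be open, $f : U \to \mathbb{C}$ analytic, $N \in M_n(\mathbb{C})$ a nilpotent Jordan block of size $n$, and $x \in U$ a zero of $f$ of finite multiplicity $p$. Write $n = mp + r$ with $0 \leq r < p$ (Euclidean division). Then $f(xI_n + N)$ is similar to the direct sum of $r$ Jordan blocks of size $m+1$ and $p - r$ Jordan blocks of size $m$. -/
/-- The nilpotent Jordan block of size `k`. -/
def J (k : ℕ) : Matrix (Fin k) (Fin k) ℂ :=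
  fun i j => if (i : ℕ) + 1 = (j : ℕ) then 1 else 0

/-- Two square complex matrices (over possibly different index types) are similar. -/
def MatSimilar {m n : Type} [Fintype m] [Fintype n] [DecidableEq m] [DecidableEq n]
    (A : Matrix m m ℂ) (B : Matrix n n ℂ) : Prop :=
  ∃ e : m ≃ n, ∃ P : Matrix n n ℂ, IsUnit P ∧ B = P * (A.submatrix e.symm e.symm) * P⁻¹

/-!
By the Leibniz rule the factorisation `f = (z - x)^p g` shifts the Taylor coefficients
`f⁽ᵏ⁾(x) / k!` by `p`, so `f(x I + J) = J^p G(J)` for the truncated Taylor polynomial `G` of `g`, and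
`G(0) = g x ≠ 0`. The upper triangular matrix `Q` whose `j`-th column is that of `G(J)^(n - j / p)`
is invertible and satisfies `J^p G(J) Q = Q J^p`, because `J^p` moves column `j` to column `j - p`
and the exponent grows by one along that move. Finally `J^p` maps `e_j` to `e_(j-p)`, so the
indices split into `p` chains by residue mod `p`: `r` chains of length `m + 1` and `p - r` of
length `m`; listing the indices chain by chain conjugates `J^p` to the block matrix.
-/

open Polynomial Filter Topology Nat

section Taylor

variable {𝕜 : Type*} [NontriviallyNormedField 𝕜] [CharZero 𝕜]

theorem iteratedDeriv_sub_pow_mul {g : 𝕜 → 𝕜} {x : 𝕜} {k : ℕ} (p : ℕ)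
    (hg : ContDiffAt 𝕜 k g x) :
    iteratedDeriv k (fun z => (z - x) ^ p * g z) x =
      if p ≤ k then (k.choose p * p ! : 𝕜) * iteratedDeriv (k - p) g x else 0 := by
  have hpow (i : ℕ) :
      iteratedDeriv i (fun z => (z - x) ^ p) x = if i = p then (p ! : 𝕜) else 0 := by
    have := congrFun (iteratedDeriv_comp_sub_const i (fun w : 𝕜 => w ^ p) x) x
    rw [sub_self] at this
    rw [this, iteratedDeriv_fun_pow_zero]
    split_ifs <;> simp
  rw [iteratedDeriv_fun_mul (by fun_prop) hg]
  simp [hpow, Finset.sum_ite_eq']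

theorem iteratedDeriv_div_factorial_of_eventuallyEq_sub_pow_mul {f g : 𝕜 → 𝕜} {x : 𝕜} {p k : ℕ}
    (hfg : f =ᶠ[𝓝 x] fun z => (z - x) ^ p * g z) (hg : ContDiffAt 𝕜 k g x) :
    iteratedDeriv k f x / k ! = if p ≤ k then iteratedDeriv (k - p) g x / (k - p)! else 0 := by
  rw [hfg.iteratedDeriv_eq, iteratedDeriv_sub_pow_mul p hg]
  split_ifs with hpk
  · have hchoose : (k.choose p : 𝕜) ≠ 0 := by exact_mod_cast (Nat.choose_pos hpk).ne'
    rw [← Nat.choose_mul_factorial_mul_factorial hpk]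
    push_cast
    field_simp
    rw [mul_div_mul_left _ _ (Nat.cast_ne_zero.mpr p.factorial_ne_zero)]
  · simp

end Taylor

theorem J_pow_apply (n l : ℕ) (i j : Fin n) :
    (J n ^ l) i j = if (i : ℕ) + l = j then 1 else 0 := by
  induction l generalizing j with
  | zero => simp [Matrix.one_apply, Fin.ext_iff]
  | succ l ih =>
    rw [pow_succ, Matrix.mul_apply]
    simp only [ih, J, ite_mul, one_mul, zero_mul]
    rw [Fin.sum_univ_eq_sum_range
      (fun b => if (i : ℕ) + l = b then if b + 1 = (j : ℕ) then (1 : ℂ) else 0 else 0),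
      Finset.sum_ite_eq]
    simp only [Finset.mem_range]
    have := j.isLt
    split_ifs <;> first | rfl | omega

theorem mul_J_pow_apply {n : ℕ} (M : Matrix (Fin n) (Fin n) ℂ) (p : ℕ) (i j : Fin n) :
    (M * J n ^ p) i j = if h : p ≤ j then M i ⟨j - p, by omega⟩ else 0 := by
  simp only [Matrix.mul_apply, J_pow_apply, mul_ite, mul_one, mul_zero]
  split_ifs with h
  · rw [Finset.sum_eq_single ⟨j - p, by omega⟩] <;> simp [Fin.ext_iff] <;> omega
  · exact Finset.sum_eq_zero fun b _ => if_neg (by omega)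

theorem aeval_J_apply {n : ℕ} (P : ℂ[X]) (i j : Fin n) :
    aeval (J n) P i j = if i ≤ j then P.coeff (j - i) else 0 := by
  induction P using Polynomial.induction_on' with
  | add P Q hP hQ => simp only [map_add, Matrix.add_apply, hP, hQ, coeff_add]; split_ifs <;> simp
  | monomial k a =>
    simp only [aeval_monomial, ← Algebra.smul_def, Matrix.smul_apply, J_pow_apply,
      coeff_monomial, smul_eq_mul, Fin.le_iff_val_le_val]
    split_ifs <;> first | omega | simp

theorem aeval_J_eq_of_coeff_eq {n : ℕ} {P P' : ℂ[X]} (h : ∀ d < n, P.coeff d = P'.coeff d) :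
    aeval (J n) P = aeval (J n) P' := by
  ext i j
  simp only [aeval_J_apply]
  split_ifs <;> first | rfl | exact h _ (by omega)

theorem MatSimilar.of_mul_eq_mul {m n : Type} [Fintype m] [Fintype n] [DecidableEq m]
    [DecidableEq n] {A B Q : Matrix m m ℂ} (hQ : IsUnit Q) (h : A * Q = Q * B) (e : n ≃ m) :
    MatSimilar A (B.submatrix e e) := by
  have hdet : IsUnit Q.det := (Matrix.isUnit_iff_isUnit_det Q).mp hQ
  have hB : B = Q⁻¹ * A * Q := by
    rw [mul_assoc, h, ← mul_assoc, Matrix.nonsing_inv_mul _ hdet, one_mul]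
  refine ⟨e.symm, Q⁻¹.submatrix e e, Matrix.isUnit_submatrix_equiv e e |>.mpr
    (Matrix.isUnit_nonsing_inv_iff.mpr hQ), ?_⟩
  rw [Equiv.symm_symm, Matrix.inv_submatrix_equiv, Matrix.nonsing_inv_nonsing_inv _ hdet,
    Matrix.submatrix_mul_equiv, Matrix.submatrix_mul_equiv, hB]

noncomputable def jordanConj (n p : ℕ) (G : ℂ[X]) : Matrix (Fin n) (Fin n) ℂ :=
  Matrix.of fun i j => aeval (J n) (G ^ (n - j / p)) i j

theorem aeval_X_pow_mul_mul_jordanConj {n p : ℕ} (hp : 0 < p) (G : ℂ[X]) :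
    aeval (J n) (X ^ p * G) * jordanConj n p G = jordanConj n p G * J n ^ p := by
  ext i j
  have hcol : (aeval (J n) (X ^ p * G) * jordanConj n p G) i j =
      (aeval (J n) (X ^ p * G) * aeval (J n) (G ^ (n - j / p))) i j := by
    simp only [Matrix.mul_apply, jordanConj, Matrix.of_apply]
  rw [hcol, ← map_mul, show X ^ p * G * G ^ (n - j / p) = G ^ (n - j / p + 1) * X ^ p by ring,
    map_mul, aeval_X_pow, mul_J_pow_apply, mul_J_pow_apply]
  split_ifs with hpj
  · have hexp : n - (j - p) / p = n - j / p + 1 := by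
      obtain ⟨k, hk⟩ := Nat.exists_eq_add_of_le hpj
      have : k / p + 1 ≤ n := by
        rw [← Nat.add_div_left _ hp, ← hk]; exact (Nat.div_le_self _ _).trans j.isLt.le
      rw [hk, Nat.add_sub_cancel_left, Nat.add_div_left _ hp]
      omega
    simp only [jordanConj, Matrix.of_apply, hexp]
  · rfl

theorem isUnit_jordanConj {n p : ℕ} {G : ℂ[X]} (hG : G.coeff 0 ≠ 0) :
    IsUnit (jordanConj n p G) := by
  rw [Matrix.isUnit_iff_isUnit_det, Matrix.det_of_isUpperTriangular]
  · refine (Finset.prod_ne_zero_iff.2 fun i _ => ?_).isUnit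
    rw [coeff_zero_eq_eval_zero] at hG
    simp [jordanConj, aeval_J_apply, coeff_zero_eq_eval_zero, hG]
  · intro i j hij
    simp only [jordanConj, Matrix.of_apply, aeval_J_apply]
    exact if_neg (not_le.mpr hij)

theorem Nat.add_mul_eq_add_mul_iff {p s s' t t' : ℕ} (hs : s < p) (hs' : s' < p) :
    s + t * p = s' + t' * p ↔ s = s' ∧ t = t' := by
  refine ⟨fun h => ?_, fun ⟨hs, ht⟩ => hs ▸ ht ▸ rfl⟩
  have hp : 0 < p := by omega
  have hmod := congrArg (· % p) h
  have hdiv := congrArg (· / p) h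
  simp only [Nat.add_mul_mod_self_right, Nat.mod_eq_of_lt hs, Nat.mod_eq_of_lt hs'] at hmod
  simp only [Nat.add_mul_div_right _ _ hp, Nat.div_eq_of_lt hs, Nat.div_eq_of_lt hs'] at hdiv
  omega

theorem Nat.add_mul_add_eq_add_mul_iff {p s s' t t' : ℕ} (hs : s < p) (hs' : s' < p) :
    s + t * p + p = s' + t' * p ↔ s = s' ∧ t + 1 = t' := by
  rw [add_assoc, ← Nat.succ_mul, Nat.add_mul_eq_add_mul_iff hs hs']

section JordanBlocks

variable {n m p r : ℕ}

-- `(t, s)` is the `t`-th entry of the chain of residue `s` (resp. `r + s`) modulo `p`.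
def jordanBlockPos (hdiv : n = m * p + r) :
    (Fin (m + 1) × Fin r) ⊕ (Fin m × Fin (p - r)) → Fin n
  | .inl (t, s) => ⟨s + t * p, by
      have := Nat.mul_le_mul_right p (Nat.lt_succ_iff.mp t.isLt); omega⟩
  | .inr (t, s) => ⟨r + s + t * p, by
      have := Nat.mul_le_mul_right p (Nat.succ_le_of_lt t.isLt); rw [Nat.succ_mul] at this; omega⟩

theorem jordanBlockPos_injective (hdiv : n = m * p + r) (hr : r < p) :
    Function.Injective (jordanBlockPos hdiv) := by
  rintro (⟨t, s⟩ | ⟨t, s⟩) (⟨t', s'⟩ | ⟨t', s'⟩) h <;>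
    simp only [jordanBlockPos, Fin.mk.injEq] at h
  all_goals
    obtain ⟨hs, ht⟩ := (Nat.add_mul_eq_add_mul_iff (by omega) (by omega)).mp h
    first
    | omega
    | simp only [Sum.inl.injEq, Sum.inr.injEq, Prod.mk.injEq, Fin.ext_iff]; omega

noncomputable def jordanBlocksEquiv (hdiv : n = m * p + r) (hr : r < p) :
    (Fin (m + 1) × Fin r) ⊕ (Fin m × Fin (p - r)) ≃ Fin n :=
  Equiv.ofBijective (jordanBlockPos hdiv) <|
    (Fintype.bijective_iff_injective_and_card _).mpr ⟨jordanBlockPos_injective hdiv hr, by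
      simp only [Fintype.card_sum, Fintype.card_prod, Fintype.card_fin]
      subst hdiv
      zify [hr.le]
      ring⟩

theorem J_pow_submatrix_jordanBlocksEquiv (hdiv : n = m * p + r) (hr : r < p) :
    (J n ^ p).submatrix (jordanBlocksEquiv hdiv hr) (jordanBlocksEquiv hdiv hr) =
      Matrix.fromBlocks (Matrix.blockDiagonal fun _ : Fin r => J (m + 1)) 0 0
        (Matrix.blockDiagonal fun _ : Fin (p - r) => J m) := by
  ext (⟨t, s⟩ | ⟨t, s⟩) (⟨t', s'⟩ | ⟨t', s'⟩) <;>
    simp only [Matrix.submatrix_apply, J_pow_apply, jordanBlocksEquiv, Equiv.ofBijective_apply,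
      jordanBlockPos, Matrix.fromBlocks_apply₁₁, Matrix.fromBlocks_apply₁₂,
      Matrix.fromBlocks_apply₂₁, Matrix.fromBlocks_apply₂₂, Matrix.blockDiagonal_apply,
      Matrix.zero_apply, J]
  all_goals
    simp (disch := omega) only [Nat.add_mul_add_eq_add_mul_iff]
    first
    | exact if_neg (by omega)
    | simp only [Fin.ext_iff, ite_and, Nat.add_left_cancel_iff]

end JordanBlocks

theorem coeff_sum_range_C_mul_X_pow (c : ℕ → ℂ) (n d : ℕ) :
    (∑ k ∈ Finset.range n, C (c k) * X ^ k).coeff d = if d < n then c d else 0 := by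
  simp

theorem aeval_J_sum_range (c : ℕ → ℂ) (n : ℕ) :
    aeval (J n) (∑ k ∈ Finset.range n, C (c k) * X ^ k) =
      ∑ k ∈ Finset.range n, c k • J n ^ k := by
  simp [Algebra.smul_def]

theorem stmt12_general (U : Set ℂ) (hU : IsOpen U) (f g : ℂ → ℂ)
    (hg : AnalyticOnNhd ℂ g U) (x : ℂ) (hx : x ∈ U)
    (p : ℕ) (hp : 0 < p) (hgx : g x ≠ 0)
    (hfac : ∀ z ∈ U, f z = (z - x) ^ p * g z)
    (n m r : ℕ) (hn : 0 < n) (hdiv : n = m * p + r) (hr : r < p) :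
    MatSimilar
      (∑ k ∈ Finset.range n, (iteratedDeriv k f x / (k.factorial : ℂ)) • (J n) ^ k)
      (Matrix.fromBlocks
        (Matrix.blockDiagonal fun _ : Fin r => J (m + 1)) 0 0
        (Matrix.blockDiagonal fun _ : Fin (p - r) => J m)) := by
  have hfg : f =ᶠ[𝓝 x] fun z => (z - x) ^ p * g z :=
    Filter.eventually_of_mem (hU.mem_nhds hx) hfac
  set G : ℂ[X] := ∑ k ∈ Finset.range n, C (iteratedDeriv k g x / k !) * X ^ k with hG
  have hA : ∑ k ∈ Finset.range n, (iteratedDeriv k f x / k !) • J n ^ k =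
      aeval (J n) (X ^ p * G) := by
    rw [← aeval_J_sum_range]
    refine aeval_J_eq_of_coeff_eq fun d hd => ?_
    rw [coeff_sum_range_C_mul_X_pow, coeff_X_pow_mul', hG, coeff_sum_range_C_mul_X_pow,
      iteratedDeriv_div_factorial_of_eventuallyEq_sub_pow_mul hfg (hg x hx).contDiffAt]
    simp only [hd, if_true]
    split_ifs <;> first | rfl | omega
  have hG0 : G.coeff 0 ≠ 0 := by simpa [hG, coeff_sum_range_C_mul_X_pow, hn] using hgx
  rw [hA, ← J_pow_submatrix_jordanBlocksEquiv hdiv hr]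
  exact MatSimilar.of_mul_eq_mul (isUnit_jordanConj hG0) (aeval_X_pow_mul_mul_jordanConj hp G) _

/-- If `f` is analytic on an open set `U`, `x ∈ U` is a zero of `f` of finite
multiplicity `p` (i.e. `f = (· - x)^p * g` with `g` analytic, `g x ≠ 0`), and
`n = m*p + r` with `0 ≤ r < p`, then `f(x Iₙ + J n) = ∑ₖ f⁽ᵏ⁾(x)/k! (J n)ᵏ` is similar
to the direct sum of `r` Jordan blocks of size `m+1` and `p - r` Jordan blocks of
size `m`. -/
theorem stmt12 (U : Set ℂ) (hU : IsOpen U) (f g : ℂ → ℂ)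
    (hf : AnalyticOnNhd ℂ f U) (hg : AnalyticOnNhd ℂ g U) (x : ℂ) (hx : x ∈ U)
    (p : ℕ) (hp : 0 < p) (hgx : g x ≠ 0)
    (hfac : ∀ z ∈ U, f z = (z - x) ^ p * g z)
    (n m r : ℕ) (hn : 0 < n) (hdiv : n = m * p + r) (hr : r < p) :
    MatSimilar
      (∑ k ∈ Finset.range n, (iteratedDeriv k f x / (k.factorial : ℂ)) • (J n) ^ k)
      (Matrix.fromBlocks
        (Matrix.blockDiagonal fun _ : Fin r => J (m + 1)) 0 0
        (Matrix.blockDiagonal fun _ : Fin (p - r) => J m)) :=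
  stmt12_general U hU f g hg x hx p hp hgx hfac n m r hn hdiv hr
end

section
/- Let $p \geq 1$. If $m$ and $m'$ are $p$-adjacent profiles, i.e., there exist non-negative integers $a, k, l$ with $pa \leq k < l \leq p(a+1)$ and $m - m' = \pm(e_k + e_l - e_{k+1} - e_{l-1})$, then $m^{[p]} = (m')^{[p]}$. -/
/-!
The profile `e_n` contributes to `m^{[p]}_a` the hat function `max (p - |n - p a|) 0` of `n`,
which is affine on every interval `[p b, p (b + 1)]` since its breakpoints are multiples of `p`.
An affine function `f` satisfies `f k + f l = f (k + 1) + f (l - 1)`, so by additivity the move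
`e_k + e_l - e_{k+1} - e_{l-1}` inside one such interval does not change `m^{[p]}`.
-/

/-- The indicator profile `e k` (with the convention `e 0 = 0`). -/
noncomputable def eProf (k : ℕ) : ℕ →₀ ℤ := if k = 0 then 0 else Finsupp.single k 1

/-- The `a`-th entry (`a ≥ 1`) of `m^[p]`:
`∑_{-p < j < p} (p - |j|) m_{p a + j}` (with `m_i = 0` for `i ≤ 0`). -/
noncomputable def profilePow (m : ℕ →₀ ℤ) (p : ℕ) (a : ℕ) : ℤ :=
  ∑ j ∈ Finset.Ioo (-(p : ℤ)) (p : ℤ), ((p : ℤ) - |j|) * m ((p * a + j).toNat)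

def hat (p c : ℕ) (n : ℤ) : ℤ := max (p - |n - p * c|) 0

theorem hat_affineOn_block (p b c : ℕ) :
    ∃ α β : ℤ, ∀ n : ℤ, p * b ≤ n → n ≤ p * (b + 1) → hat p c n = α * n + β := by
  simp only [hat, abs_eq_max_neg, mul_add, mul_one]
  rcases lt_or_ge (b + 1) c with hbc | hcb
  · have : (p * b + p * 2 : ℤ) ≤ p * c := by
      rw [← mul_add]; exact_mod_cast Nat.mul_le_mul_left p hbc
    exact ⟨0, 0, fun n _ _ => by omega⟩
  rcases eq_or_lt_of_le hcb with rfl | hcb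
  · exact ⟨1, -(p * b), fun n _ _ => by push_cast [mul_add, mul_one]; omega⟩
  rcases eq_or_lt_of_le (Nat.lt_succ_iff.mp hcb) with rfl | hcb
  · exact ⟨-1, p + p * c, fun n _ _ => by omega⟩
  · have : (p * c + p : ℤ) ≤ p * b := by exact_mod_cast Nat.mul_le_mul_left p hcb
    exact ⟨0, 0, fun n _ _ => by omega⟩

theorem add_eq_add_of_affineOn {f : ℤ → ℤ} {x y k l α β : ℤ}
    (hf : ∀ n, x ≤ n → n ≤ y → f n = α * n + β) (hk : x ≤ k) (hkl : k < l) (hl : l ≤ y) :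
    f k + f l = f (k + 1) + f (l - 1) := by
  rw [hf k hk (by omega), hf l (by omega) hl, hf (k + 1) (by omega) (by omega),
    hf (l - 1) (by omega) (by omega)]
  ring

theorem profilePow_add (m m' : ℕ →₀ ℤ) (p a : ℕ) :
    profilePow (m + m') p a = profilePow m p a + profilePow m' p a := by
  simp [profilePow, mul_add, Finset.sum_add_distrib]

theorem profilePow_sub (m m' : ℕ →₀ ℤ) (p a : ℕ) :
    profilePow (m - m') p a = profilePow m p a - profilePow m' p a := by
  simp [profilePow, mul_sub, Finset.sum_sub_distrib]

theorem profilePow_eProf (p n : ℕ) {a : ℕ} (ha : 1 ≤ a) :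
    profilePow (eProf n) p a = hat p a n := by
  unfold profilePow eProf hat
  split_ifs with hn
  · subst hn
    have hpa : (p : ℤ) ≤ p * a := le_mul_of_one_le_right (by positivity) (by exact_mod_cast ha)
    simp [abs_of_nonneg (by positivity : (0 : ℤ) ≤ p * a), hpa]
  · have hterm : ∀ j ∈ Finset.Ioo (-(p : ℤ)) p,
        (p - |j|) * Finsupp.single n (1 : ℤ) ((p * a + j).toNat)
          = if j = n - p * a then p - |j| else 0 := by
      intro j hj
      rw [Finset.mem_Ioo] at hj
      rw [Finsupp.single_apply]
      split_ifs <;> omega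
    rw [Finset.sum_congr rfl hterm, Finset.sum_ite_eq' (Finset.Ioo (-(p : ℤ)) p)]
    split_ifs with h <;> rw [Finset.mem_Ioo] at h <;> simp only [abs_eq_max_neg] <;> omega

theorem profilePow_adjacentMove_eq_zero (p c k l : ℕ) {a : ℕ} (ha : 1 ≤ a)
    (hk : p * c ≤ k) (hkl : k < l) (hl : l ≤ p * (c + 1)) :
    profilePow (eProf k + eProf l - eProf (k + 1) - eProf (l - 1)) p a = 0 := by
  obtain ⟨α, β, hhat⟩ := hat_affineOn_block p c a
  have hmove := add_eq_add_of_affineOn hhat (k := k) (l := l) (by exact_mod_cast hk)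
    (by exact_mod_cast hkl) (by exact_mod_cast hl)
  simp only [profilePow_sub, profilePow_add, profilePow_eProf _ _ ha]
  push_cast [Nat.one_le_of_lt hkl]
  omega

theorem profilePow_eq_of_sub_eq_zero (m m' : ℕ →₀ ℤ) (p a : ℕ)
    (h : profilePow (m - m') p a = 0) : profilePow m p a = profilePow m' p a := by
  rwa [profilePow_sub, sub_eq_zero] at h

theorem stmt15_general (p : ℕ) (m m' : ℕ →₀ ℤ)
    (hadj : ∃ a k l : ℕ, p * a ≤ k ∧ k < l ∧ l ≤ p * (a + 1) ∧
      (m - m' = eProf k + eProf l - eProf (k + 1) - eProf (l - 1) ∨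
       m' - m = eProf k + eProf l - eProf (k + 1) - eProf (l - 1))) :
    ∀ a : ℕ, 1 ≤ a → profilePow m p a = profilePow m' p a := by
  obtain ⟨c, k, l, hk, hkl, hl, hmove⟩ := hadj
  intro a ha
  have hzero := profilePow_adjacentMove_eq_zero p c k l ha hk hkl hl
  rcases hmove with hmove | hmove
  · exact profilePow_eq_of_sub_eq_zero m m' p a (hmove ▸ hzero)
  · exact (profilePow_eq_of_sub_eq_zero m' m p a (hmove ▸ hzero)).symm

/-- If `m` and `m'` are `p`-adjacent profiles, i.e. `m - m' = ±(e_k + e_l - e_{k+1} - e_{l-1})`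
for some `a, k, l` with `p a ≤ k < l ≤ p (a+1)`, then `m^[p] = m'^[p]`. -/
theorem stmt15 (p : ℕ) (hp : 1 ≤ p) (m m' : ℕ →₀ ℤ) (hm0 : m 0 = 0) (hm'0 : m' 0 = 0)
    (hadj : ∃ a k l : ℕ, p * a ≤ k ∧ k < l ∧ l ≤ p * (a + 1) ∧
      (m - m' = eProf k + eProf l - eProf (k + 1) - eProf (l - 1) ∨
       m' - m = eProf k + eProf l - eProf (k + 1) - eProf (l - 1))) :
    ∀ a : ℕ, 1 ≤ a → profilePow m p a = profilePow m' p a :=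
  stmt15_general p m m' hadj
end

section
/- Let $p \geq 1$ and let $m, m'$ be profiles in $\mathbb{N}^{(\mathbb{N}^*)}$ with $m^{[p]} = (m')^{[p]}$. Then there exists a finite sequence of profiles $a^{(0)} = m, a^{(1)}, \dots, a^{(N)} = m'$ such that consecutive profiles are $p$-adjacent: for each $i$, there exist non-negative integers $a, k, l$ with $pa \leq k < l \leq p(a+1)$ and $a^{(i)} - a^{(i+1)} = \pm(e_k + e_l - e_{k+1} - e_{l-1})$. -/
/-- `m` and `m'` are `p`-adjacent profiles. -/
def PAdjacent (p : ℕ) (m m' : ℕ →₀ ℤ) : Prop :=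
  ∃ a k l : ℕ, p * a ≤ k ∧ k < l ∧ l ≤ p * (a + 1) ∧
    (m - m' = eProf k + eProf l - eProf (k + 1) - eProf (l - 1) ∨
     m' - m = eProf k + eProf l - eProf (k + 1) - eProf (l - 1))

open Finset Relation

lemma eq_and_eq_of_add_mul_eq {p r r' q q' : ℤ} (hr : 0 ≤ r) (hrp : r < p) (hr' : 0 ≤ r')
    (hr'p : r' < p) (h : r + p * q = r' + p * q') : r = r' ∧ q = q' := by
  have hp : 0 < p := by omega
  obtain ⟨hq, hr⟩ := (Int.ediv_emod_unique hp).mpr ⟨rfl, hr, hrp⟩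
  obtain ⟨hq', hr'⟩ := (Int.ediv_emod_unique hp).mpr ⟨h.symm, hr', hr'p⟩
  exact ⟨hr.symm.trans hr', hq.symm.trans hq'⟩

lemma eq_ite_of_sum_le_one {ι : Type*} [DecidableEq ι] {s : Finset ι} {f : ι → ℤ}
    (hf : ∀ j ∈ s, 0 ≤ f j) (hs : ∑ j ∈ s, f j ≤ 1) {i : ι} (hi : i ∈ s) (hfi : 1 ≤ f i) :
    ∀ j ∈ s, f j = if j = i then 1 else 0 := by
  intro j hj
  split_ifs with hji
  · subst hji
    have := single_le_sum hf hj
    omega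
  · have := sum_le_sum_of_subset_of_nonneg (insert_subset hi (singleton_subset_iff.mpr hj))
      fun k hk _ => hf k hk
    rw [sum_pair (Ne.symm hji)] at this
    have := hf j hj
    omega

lemma eq_ite_sum_mul {ι : Type*} [DecidableEq ι] {s : Finset ι} {w f : ι → ℤ}
    (hw : Set.InjOn w s) (hw0 : ∀ i ∈ s, w i ≠ 0)
    (hf : ∀ j ∈ s, 0 ≤ f j) (hs : ∑ j ∈ s, f j ≤ 1) :
    ∀ i ∈ s, f i = if w i = ∑ j ∈ s, w j * f j then 1 else 0 := by
  have hsum : ∀ i ∈ s, 1 ≤ f i → ∑ j ∈ s, w j * f j = w i := fun i hi hfi => by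
    rw [sum_congr rfl fun j hj => by rw [eq_ite_of_sum_le_one hf hs hi hfi j hj]]
    simp [hi]
  intro i hi
  by_cases hfi : 1 ≤ f i
  · rw [hsum i hi hfi, if_pos rfl]
    simpa using eq_ite_of_sum_le_one hf hs hi hfi i hi
  · rw [if_neg]
    · have := hf i hi
      omega
    intro hwi
    by_cases hex : ∃ j ∈ s, 1 ≤ f j
    · obtain ⟨j, hj, hfj⟩ := hex
      rw [hsum j hj hfj] at hwi
      exact hfi (hw hi hj hwi ▸ hfj)
    · push Not at hex
      rw [sum_eq_zero fun j hj => by rw [show f j = 0 by have := hf j hj; have := hex j hj; omega,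
        mul_zero]] at hwi
      exact hw0 i hi hwi

lemma sum_mul_le_of_sum_le_one {ι : Type*} {s : Finset ι} {w f : ι → ℤ} {W : ℤ}
    (hw : ∀ j ∈ s, w j ≤ W) (hW : 0 ≤ W) (hf : ∀ j ∈ s, 0 ≤ f j) (hs : ∑ j ∈ s, f j ≤ 1) :
    ∑ j ∈ s, w j * f j ≤ W :=
  calc ∑ j ∈ s, w j * f j ≤ ∑ j ∈ s, W * f j :=
        sum_le_sum fun j hj => mul_le_mul_of_nonneg_right (hw j hj) (hf j hj)
    _ = W * ∑ j ∈ s, f j := by rw [mul_sum]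
    _ ≤ W := by nlinarith

lemma Relation.ReflTransGen.exists_seq {α : Type*} {r : α → α → Prop} {a b : α}
    (h : ReflTransGen r a b) :
    ∃ N, ∃ c : ℕ → α, c 0 = a ∧ c N = b ∧ ∀ i < N, r (c i) (c (i + 1)) := by
  induction h using Relation.ReflTransGen.head_induction_on with
  | refl => exact ⟨0, fun _ => b, rfl, rfl, by simp⟩
  | head hac _ ih =>
    obtain ⟨N, c, h0, hN, hc⟩ := ih
    refine ⟨N + 1, fun | 0 => _ | i + 1 => c i, rfl, hN, ?_⟩
    rintro (_ | i) hi
    · simpa [h0] using hac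
    · exact hc i (by omega)

lemma eProf_apply (k t : ℕ) : eProf k t = if k ≠ 0 ∧ t = k then 1 else 0 := by
  unfold eProf
  split_ifs with hk hkt hkt <;> simp_all [eq_comm]

lemma eProf_apply_zero (k : ℕ) : eProf k 0 = 0 := by
  rw [eProf_apply, if_neg (by omega)]

lemma eProf_nonneg (k t : ℕ) : 0 ≤ eProf k t := by
  rw [eProf_apply]; split_ifs <;> norm_num

lemma linearCombination_eProf {w : ℕ → ℤ} (hw : w 0 = 0) (k : ℕ) :
    Finsupp.linearCombination ℤ w (eProf k) = w k := by
  unfold eProf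
  split_ifs with hk <;> simp [hk, hw]

noncomputable def moveVec (k l : ℕ) : ℕ →₀ ℤ :=
  eProf k + eProf l - eProf (k + 1) - eProf (l - 1)

lemma linearCombination_moveVec {w : ℕ → ℤ} (hw : w 0 = 0) (k l : ℕ) :
    Finsupp.linearCombination ℤ w (moveVec k l) = w k + w l - w (k + 1) - w (l - 1) := by
  simp only [moveVec, map_add, map_sub, linearCombination_eProf hw]

lemma PAdjacent.symm {p : ℕ} {m m' : ℕ →₀ ℤ} (h : PAdjacent p m m') : PAdjacent p m' m := by
  obtain ⟨a, k, l, hka, hkl, hla, hmove⟩ := h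
  exact ⟨a, k, l, hka, hkl, hla, hmove.symm⟩

def tent (p b t : ℕ) : ℤ := max (p - |(t : ℤ) - p * b|) 0

lemma tent_zero {p b : ℕ} (hb : 1 ≤ b) : tent p b 0 = 0 := by
  have : p ≤ p * b := Nat.le_mul_of_pos_right p hb
  unfold tent
  zify at this
  rw [abs_eq_max_neg]
  omega

lemma tent_add_tent {p a b k l : ℕ} (hka : p * a ≤ k) (hkl : k < l) (hla : l ≤ p * a + p) :
    tent p b k + tent p b l = tent p b (k + 1) + tent p b (l - 1) := by
  have hb : p * b + p ≤ p * a ∨ p * b = p * a ∨ p * b = p * a + p ∨ p * a + 2 * p ≤ p * b := by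
    rcases lt_trichotomy b a with h | rfl | h
    · left; nlinarith
    · simp
    · rcases (show b = a + 1 ∨ a + 2 ≤ b by omega) with rfl | h
      · right; right; left; ring
      · right; right; right; nlinarith
  unfold tent
  push_cast [Nat.cast_sub (by omega : 1 ≤ l), abs_eq_max_neg]
  zify at hb hka hla
  rcases hb with h | h | h | h <;> omega

lemma profilePow_succ_eq_sum (m : ℕ →₀ ℤ) (p c : ℕ) :
    profilePow m p (c + 1) =
      ∑ t ∈ Ioo (p * c) (p * c + 2 * p), tent p (c + 1) t * m t := by
  have hpc : 0 ≤ (p : ℤ) * c := by positivity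
  unfold profilePow tent
  refine sum_nbij' (fun j => (p * (c + 1 : ℕ) + j).toNat) (fun t => t - p * (c + 1 : ℕ))
    ?_ ?_ ?_ ?_ ?_ <;> intro x hx <;> simp only [mem_Ioo] at hx ⊢ <;>
    push_cast [mul_add_one] at hx ⊢
  any_goals omega
  rw [Int.toNat_of_nonneg (by omega), add_sub_cancel_left,
    max_eq_left (by rw [abs_eq_max_neg]; omega)]

lemma tent_eq_zero_of_notMem {p c t : ℕ} (ht : t ∉ Ioo (p * c) (p * c + 2 * p)) :
    tent p (c + 1) t = 0 := by
  rw [mem_Ioo] at ht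
  unfold tent
  push_cast [mul_add_one, abs_eq_max_neg]
  zify at ht
  omega

lemma profilePow_eq_linearCombination (m : ℕ →₀ ℤ) {p b : ℕ} (hb : 1 ≤ b) :
    profilePow m p b = Finsupp.linearCombination ℤ (tent p b) m := by
  obtain ⟨c, rfl⟩ : ∃ c, b = c + 1 := ⟨b - 1, by omega⟩
  rw [profilePow_succ_eq_sum, Finsupp.linearCombination_apply,
    Finsupp.sum_of_support_subset m subset_union_left (fun t a => a • tent p (c + 1) t)
      fun _ _ => zero_smul ℤ _]
  refine (sum_congr rfl fun t _ => by rw [smul_eq_mul, mul_comm]).trans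
    (sum_subset subset_union_right fun t _ ht => ?_)
  rw [tent_eq_zero_of_notMem ht, smul_zero]

lemma profilePow_add_moveVec (m : ℕ →₀ ℤ) {p a b k l : ℕ} (hb : 1 ≤ b)
    (hka : p * a ≤ k) (hkl : k < l) (hla : l ≤ p * a + p) :
    profilePow (m + moveVec k l) p b = profilePow m p b := by
  simp only [profilePow_eq_linearCombination _ hb, map_add,
    linearCombination_moveVec (tent_zero hb), tent_add_tent hka hkl hla]
  ring

lemma profilePow_succ_eq_block_add (m : ℕ →₀ ℤ) (p c : ℕ) :
    profilePow m p (c + 1) =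
      ∑ t ∈ Ioc (p * c) (p * c + p), ((t : ℤ) - p * c) * m t +
        ∑ t ∈ Ioo (p * c + p) (p * c + 2 * p), tent p (c + 1) t * m t := by
  have hsplit : Ioo (p * c) (p * c + 2 * p) =
      Ioc (p * c) (p * c + p) ∪ Ioo (p * c + p) (p * c + 2 * p) := by
    ext t; simp only [mem_union, mem_Ioo, mem_Ioc]; omega
  have hdisj : Disjoint (Ioc (p * c) (p * c + p)) (Ioo (p * c + p) (p * c + 2 * p)) := by
    rw [disjoint_left]; intro t ht ht'; rw [mem_Ioc] at ht; rw [mem_Ioo] at ht'; omega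
  rw [profilePow_succ_eq_sum, hsplit, sum_union hdisj]
  congr 1
  refine sum_congr rfl fun t ht => ?_
  rw [mem_Ioc] at ht
  unfold tent
  push_cast [mul_add_one, abs_eq_max_neg]
  zify at ht
  congr 1
  omega

noncomputable def profileSize : (ℕ →₀ ℤ) →ₗ[ℤ] ℤ :=
  Finsupp.linearCombination ℤ fun k => (k : ℤ)

noncomputable def profileEnergy : (ℕ →₀ ℤ) →ₗ[ℤ] ℤ :=
  Finsupp.linearCombination ℤ fun k => (k : ℤ) ^ 2

lemma profileSize_moveVec {k l : ℕ} (hkl : k < l) : profileSize (moveVec k l) = 0 := by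
  rw [profileSize, linearCombination_moveVec (by simp)]
  push_cast [Nat.cast_sub (by omega : 1 ≤ l)]
  ring

lemma profileEnergy_moveVec {k l : ℕ} (hkl : k < l) :
    profileEnergy (moveVec k l) = 2 * ((l : ℤ) - k - 1) := by
  rw [profileEnergy, linearCombination_moveVec (by simp)]
  push_cast [Nat.cast_sub (by omega : 1 ≤ l)]
  ring

lemma profileSize_eq_sum (m : ℕ →₀ ℤ) : profileSize m = ∑ k ∈ m.support, m k * k :=
  Finsupp.linearCombination_apply ℤ m

lemma le_profileSize {m : ℕ →₀ ℤ} (hm : ∀ k, 0 ≤ m k) {k : ℕ} (hk : k ∈ m.support) :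
    (k : ℤ) ≤ profileSize m := by
  have hmk : 1 ≤ m k := by
    have := Finsupp.mem_support_iff.mp hk
    have := hm k
    omega
  rw [profileSize_eq_sum]
  calc (k : ℤ) ≤ m k * k := by nlinarith
    _ ≤ ∑ i ∈ m.support, m i * i :=
      single_le_sum (f := fun i : ℕ => m i * (i : ℤ)) (fun i _ => by have := hm i; positivity) hk

lemma profileEnergy_le_sq {m : ℕ →₀ ℤ} (hm : ∀ k, 0 ≤ m k) :
    profileEnergy m ≤ profileSize m ^ 2 :=
  calc profileEnergy m = ∑ k ∈ m.support, (k : ℤ) * (m k * k) := by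
        rw [profileEnergy, Finsupp.linearCombination_apply]
        exact sum_congr rfl fun k _ => by simp only [smul_eq_mul]; ring
    _ ≤ ∑ k ∈ m.support, profileSize m * (m k * k) :=
        sum_le_sum fun k hk => mul_le_mul_of_nonneg_right (le_profileSize hm hk)
          (by have := hm k; positivity)
    _ = profileSize m ^ 2 := by rw [← mul_sum, ← profileSize_eq_sum, sq]

def IsProfile (m : ℕ →₀ ℤ) : Prop := m 0 = 0 ∧ ∀ k, 0 ≤ m k

/-- No move `e_x + e_y ↦ e_{x-1} + e_{y+1}` inside an open block applies to `m`. -/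
def IsSpread (p : ℕ) (m : ℕ →₀ ℤ) : Prop :=
  ∀ a, ∑ k ∈ Ioo (p * a) (p * a + p), m k ≤ 1

lemma exists_pair_of_not_isSpread {p : ℕ} {m : ℕ →₀ ℤ} (hm : ∀ k, 0 ≤ m k)
    (h : ¬ IsSpread p m) :
    ∃ a x y, p * a < x ∧ x ≤ y ∧ y < p * a + p ∧ ∀ k, 0 ≤ (m - eProf x - eProf y) k := by
  obtain ⟨a, ha⟩ : ∃ a, 1 < ∑ k ∈ Ioo (p * a) (p * a + p), m k := by
    simpa [IsSpread] using h
  obtain ⟨x, hx, hmx⟩ := exists_lt_of_sum_lt (s := Ioo (p * a) (p * a + p)) (f := fun _ => 0)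
    (g := fun k => m k) (by simp only [sum_const_zero]; omega)
  have hx' := mem_Ioo.mp hx
  have hsum_x : ∑ k ∈ Ioo (p * a) (p * a + p), eProf x k = 1 := by
    simp [eProf, show x ≠ 0 by omega, Finsupp.single_apply, hx]
  obtain ⟨y, hy, hmy⟩ := exists_lt_of_sum_lt (s := Ioo (p * a) (p * a + p)) (f := fun _ => 0)
    (g := fun k => m k - eProf x k) (by rw [sum_sub_distrib, hsum_x, sum_const_zero]; omega)
  have hy' := mem_Ioo.mp hy
  have hpair : ∀ k, 0 ≤ (m - eProf x - eProf y) k := by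
    intro k
    have := hm k
    simp only [Finsupp.coe_sub, Pi.sub_apply, eProf_apply] at hmx hmy ⊢
    by_cases hky : k = y
    · subst hky
      split_ifs at hmy ⊢ <;> omega
    · by_cases hkx : k = x
      · subst hkx
        split_ifs at hmy ⊢ <;> omega
      · split_ifs <;> omega
  rcases le_total x y with hxy | hyx
  · exact ⟨a, x, y, hx'.1, hxy, hy'.2, hpair⟩
  · exact ⟨a, y, x, hy'.1, hyx, hx'.2, by rwa [sub_right_comm]⟩

lemma exists_move_of_not_isSpread {p : ℕ} {m : ℕ →₀ ℤ} (hm : IsProfile m)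
    (h : ¬ IsSpread p m) :
    ∃ m₁, IsProfile m₁ ∧ PAdjacent p m m₁ ∧
      (∀ b, 1 ≤ b → profilePow m₁ p b = profilePow m p b) ∧
      profileSize m₁ = profileSize m ∧ profileEnergy m + 2 ≤ profileEnergy m₁ := by
  obtain ⟨a, x, y, hx, hxy, hy, hrest⟩ := exists_pair_of_not_isSpread hm.2 h
  have hka : p * a ≤ x - 1 := by omega
  have hla : y + 1 ≤ p * a + p := by omega
  have hkl : x - 1 < y + 1 := by omega
  have hm₁ : m + moveVec (x - 1) (y + 1) =
      m - eProf x - eProf y + eProf (x - 1) + eProf (y + 1) := by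
    rw [moveVec, Nat.sub_add_cancel (by omega : 1 ≤ x), Nat.add_sub_cancel]
    abel
  refine ⟨m + moveVec (x - 1) (y + 1), ⟨?_, fun k => ?_⟩,
    ⟨a, x - 1, y + 1, hka, hkl, by rw [mul_add_one]; exact hla, Or.inr (add_sub_cancel_left _ _)⟩,
    fun b hb => profilePow_add_moveVec m hb hka hkl hla, ?_, ?_⟩
  · simp [hm₁, eProf_apply_zero, hm.1]
  · have := hrest k
    have := eProf_nonneg (x - 1) k
    have := eProf_nonneg (y + 1) k
    rw [hm₁, Finsupp.add_apply, Finsupp.add_apply]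
    omega
  · rw [map_add, profileSize_moveVec hkl, add_zero]
  · rw [map_add, profileEnergy_moveVec hkl]
    push_cast [Nat.cast_sub (by omega : 1 ≤ x)]
    omega

def AdjStep (p : ℕ) (m m' : ℕ →₀ ℤ) : Prop := IsProfile m ∧ IsProfile m' ∧ PAdjacent p m m'

instance (p : ℕ) : Std.Symm (AdjStep p) where
  symm _ _ h := ⟨h.2.1, h.1, h.2.2.symm⟩

lemma exists_isSpread {p : ℕ} {m : ℕ →₀ ℤ} (hm : IsProfile m) :
    ∃ n, IsProfile n ∧ IsSpread p n ∧ ReflTransGen (AdjStep p) m n ∧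
      ∀ b, 1 ≤ b → profilePow n p b = profilePow m p b := by
  induction h : (profileSize m ^ 2 - profileEnergy m).toNat using Nat.strong_induction_on
    generalizing m with
  | _ μ ih =>
    by_cases hspread : IsSpread p m
    · exact ⟨m, hm, hspread, .refl, fun _ _ => rfl⟩
    obtain ⟨m₁, hm₁, hadj, hpow, hsize, henergy⟩ := exists_move_of_not_isSpread hm hspread
    have hbound := profileEnergy_le_sq hm₁.2
    obtain ⟨n, hn, hnspread, hchain, hpow'⟩ := ih _ (by rw [hsize] at hbound ⊢; omega) hm₁ rfl
    exact ⟨n, hn, hnspread, .head ⟨hm, hm₁, hadj⟩ hchain,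
      fun b hb => (hpow' b hb).trans (hpow b hb)⟩

lemma IsSpread.eqOn_Ioc {p c : ℕ} {m n : ℕ →₀ ℤ} (hp : 1 ≤ p) (hm : ∀ k, 0 ≤ m k)
    (hn : ∀ k, 0 ≤ n k) (hms : IsSpread p m) (hns : IsSpread p n)
    (hpow : profilePow m p (c + 1) = profilePow n p (c + 1))
    (habove : ∀ t, p * c + p < t → m t = n t) :
    ∀ t ∈ Ioc (p * c) (p * c + p), m t = n t := by
  set w : ℕ → ℤ := fun t => t - p * c
  have hsplit (f : ℕ →₀ ℤ) : ∑ t ∈ Ioc (p * c) (p * c + p), w t * f t =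
      ∑ t ∈ Ioo (p * c) (p * c + p), w t * f t + p * f (p * c + p) := by
    rw [← Ioo_insert_right (by omega), sum_insert (by simp), add_comm]
    simp [w]
  have hblock : ∑ t ∈ Ioo (p * c) (p * c + p), w t * m t + p * m (p * c + p) =
      ∑ t ∈ Ioo (p * c) (p * c + p), w t * n t + p * n (p * c + p) := by
    have htop : ∑ t ∈ Ioo (p * c + p) (p * c + 2 * p), tent p (c + 1) t * m t =
        ∑ t ∈ Ioo (p * c + p) (p * c + 2 * p), tent p (c + 1) t * n t :=
      sum_congr rfl fun t ht => by rw [habove t (mem_Ioo.mp ht).1]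
    rw [profilePow_succ_eq_block_add, profilePow_succ_eq_block_add, htop] at hpow
    rw [← hsplit, ← hsplit]
    exact add_right_cancel hpow
  have hw : ∀ t ∈ Ioo (p * c) (p * c + p), 0 < w t ∧ w t ≤ p - 1 := fun t ht => by
    have := mem_Ioo.mp ht
    simp only [w]
    omega
  have hbounds (f : ℕ →₀ ℤ) (hf : ∀ k, 0 ≤ f k) (hfs : IsSpread p f) :
      0 ≤ ∑ t ∈ Ioo (p * c) (p * c + p), w t * f t ∧
        ∑ t ∈ Ioo (p * c) (p * c + p), w t * f t < p :=
    ⟨sum_nonneg fun t ht => mul_nonneg (hw t ht).1.le (hf t),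
      (sum_mul_le_of_sum_le_one (fun t ht => (hw t ht).2) (by omega) (fun t _ => hf t)
        (hfs c)).trans_lt (by omega)⟩
  obtain ⟨hinterior, htop⟩ := eq_and_eq_of_add_mul_eq (hbounds m hm hms).1 (hbounds m hm hms).2
    (hbounds n hn hns).1 (hbounds n hn hns).2 hblock
  have hinj : Set.InjOn w (Ioo (p * c) (p * c + p)) := fun t _ u _ h => by
    simp only [w] at h
    omega
  intro t ht
  rcases eq_or_ne t (p * c + p) with rfl | htop'
  · exact htop
  have ht' : t ∈ Ioo (p * c) (p * c + p) := mem_Ioo.mpr ⟨(mem_Ioc.mp ht).1, by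
    have := (mem_Ioc.mp ht).2; omega⟩
  have hw0 := fun t ht => (hw t ht).1.ne'
  rw [eq_ite_sum_mul hinj hw0 (fun t _ => hm t) (hms c) t ht',
    eq_ite_sum_mul hinj hw0 (fun t _ => hn t) (hns c) t ht', hinterior]

lemma IsSpread.eq_of_profilePow_eq {p : ℕ} {m n : ℕ →₀ ℤ} (hp : 1 ≤ p) (hm : IsProfile m)
    (hn : IsProfile n) (hms : IsSpread p m) (hns : IsSpread p n)
    (hpow : ∀ b, 1 ≤ b → profilePow m p b = profilePow n p b) : m = n := by
  by_contra hne
  have hD : (m - n).support.Nonempty := Finsupp.support_nonempty_iff.mpr (sub_ne_zero.mpr hne)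
  set t₀ := (m - n).support.max' hD
  have hmem : m t₀ ≠ n t₀ := by
    simpa [sub_eq_zero] using (m - n).support.max'_mem hD
  have habove : ∀ t, t₀ < t → m t = n t := fun t ht => by
    by_contra h
    exact (not_le.mpr ht) ((m - n).support.le_max' t (by simpa [sub_eq_zero] using h))
  have ht₀ : t₀ ≠ 0 := fun h => hmem (by rw [h, hm.1, hn.1])
  obtain ⟨c, hc₁, hc₂⟩ : ∃ c, p * c < t₀ ∧ t₀ ≤ p * c + p := by
    refine ⟨(t₀ - 1) / p, ?_⟩
    have := Nat.div_add_mod (t₀ - 1) p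
    have := Nat.mod_lt (t₀ - 1) (by omega : 0 < p)
    omega
  exact hmem (hms.eqOn_Ioc hp hm.2 hn.2 hns (hpow (c + 1) (by omega))
    (fun t ht => habove t (by omega)) t₀ (mem_Ioc.mpr ⟨hc₁, hc₂⟩))

/-- If `m` and `m'` are profiles (finitely supported sequences of non-negative integers
indexed by positive integers) with `m^[p] = m'^[p]`, then there is a finite chain of
profiles from `m` to `m'` whose consecutive terms are `p`-adjacent. -/
theorem stmt16 (p : ℕ) (hp : 1 ≤ p) (m m' : ℕ →₀ ℤ)
    (hm0 : m 0 = 0) (hm'0 : m' 0 = 0)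
    (hmnn : ∀ k, 0 ≤ m k) (hm'nn : ∀ k, 0 ≤ m' k)
    (hpow : ∀ a : ℕ, 1 ≤ a → profilePow m p a = profilePow m' p a) :
    ∃ N : ℕ, ∃ c : ℕ → (ℕ →₀ ℤ),
      c 0 = m ∧ c N = m' ∧
      (∀ i ≤ N, (c i) 0 = 0 ∧ ∀ k, 0 ≤ (c i) k) ∧
      ∀ i < N, PAdjacent p (c i) (c (i + 1)) := by
  obtain ⟨n, hn, hns, hmn, hpn⟩ := exists_isSpread (p := p) ⟨hm0, hmnn⟩
  obtain ⟨n', hn', hns', hmn', hpn'⟩ := exists_isSpread (p := p) ⟨hm'0, hm'nn⟩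
  obtain rfl : n = n' := hns.eq_of_profilePow_eq hp hn hn' hns' fun b hb => by
    rw [hpn b hb, hpow b hb, hpn' b hb]
  obtain ⟨N, c, h0, hN, hc⟩ := (hmn.trans (symm hmn')).exists_seq
  refine ⟨N, c, h0, hN, fun i hi => ?_, fun i hi => (hc i hi).2.2⟩
  rcases i with _ | i
  · exact h0 ▸ ⟨hm0, hmnn⟩
  · exact (hc i (by omega)).2.1
end
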